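/- arXiv:1310.3210 — 2 statements merged into one kernel-verified Lean document; each statement's English description precedes it below -/
import Mathlib

section
/- Automatic closure theorem: if T : V → W is a continuous K-linear transformation between pro-finite-dimensional K-vector spaces (inverse limits of sequences of finite-dimensional K-vector spaces with the inverse-limit topology), then the image T(V) is a closed subspace of W. -/
/-!
A point `w` in the closure of `T(V)` has each coordinate `w j` in the closure of the range of
`π_j ∘ T`, a subspace of `K^{m j}` and hence closed, so the fibres `A j = {v | (T v) j = w j}`
form a decreasing chain of nonempty closed affine subspaces of `V`. Their images in each
finite-dimensional stage `V i` stabilise, and the stable images form an inverse system with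
surjective maps, which has a thread `x ∈ V`. Every neighbourhood of `x` contains all `v` with
`v i = x i` for one `i`, so `x` lies in the closure of each `A j`, hence in each `A j`: `T x = w`.
-/

open Topology Filter

/-- The inverse limit of an inverse sequence of `K`-modules along the connecting
maps `q i : V (i+1) → V i`, realized as the submodule of consistent sequences in
the product `∀ i, V i`. -/
def invLim (K : Type) [Field K] (V : ℕ → Type) [∀ i, AddCommGroup (V i)]
    [∀ i, Module K (V i)] (q : ∀ i, V (i + 1) →ₗ[K] V i) : Submodule K (∀ i, V i) where
  carrier := {v | ∀ i, q i (v (i + 1)) = v i}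
  add_mem' := by intro a b ha hb i; simp [ha i, hb i]
  zero_mem' := by intro i; simp
  smul_mem' := by intro c a ha i; simp [ha i]

/-- The canonical projection `Q i` from the inverse limit to the `i`-th stage. -/
def invLimProj (K : Type) [Field K] (V : ℕ → Type) [∀ i, AddCommGroup (V i)]
    [∀ i, Module K (V i)] (q : ∀ i, V (i + 1) →ₗ[K] V i) (i : ℕ) :
    ↥(invLim K V q) →ₗ[K] V i :=
  (LinearMap.proj i).comp (invLim K V q).subtype

/-- The composite connecting map `q^j_i : V j → V i` for `i ≤ j`. -/
def qIter (K : Type) [Field K] (V : ℕ → Type) [∀ i, AddCommGroup (V i)]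
    [∀ i, Module K (V i)] (q : ∀ i, V (i + 1) →ₗ[K] V i) (i : ℕ) :
    ∀ j, i ≤ j → (V j →ₗ[K] V i)
  | 0, h => by
    have hi : i = 0 := Nat.le_zero.mp h
    subst hi; exact LinearMap.id
  | j + 1, h =>
    if heq : i = j + 1 then by subst heq; exact LinearMap.id
    else (qIter K V q i j (by omega)).comp (q j)

theorem Submodule.isClosed_of_finite_pi {K ι : Type*} [Field K] [TopologicalSpace K]
    [IsTopologicalRing K] [T1Space K] [Finite ι] (S : Submodule K (ι → K)) :
    IsClosed (S : Set (ι → K)) := by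
  let f := (Module.finBasis K ((ι → K) ⧸ S)).equivFun.toLinearMap ∘ₗ S.mkQ
  have hS : (S : Set (ι → K)) = f ⁻¹' {0} := by
    ext x
    simp [f]
  rw [hS]
  exact isClosed_singleton.preimage f.continuous_on_pi

theorem AffineSubspace.antitone_stabilizes {k V P : Type*} [Ring k] [AddCommGroup V] [Module k V]
    [AddTorsor V P] [IsArtinian k V] (A : ℕ → AffineSubspace k P) (hA : Antitone A)
    (hne : ∀ j, (A j : Set P).Nonempty) : ∃ J, ∀ j, J ≤ j → A j = A J := by
  obtain ⟨J, hJ⟩ := IsArtinian.monotone_stabilizes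
    ⟨fun j => OrderDual.toDual (A j).direction, fun _ _ h => direction_le (hA h)⟩
  exact ⟨J, fun j hj => eq_of_direction_eq_of_nonempty_of_le (hJ j hj).symm (hne j) (hA hj)⟩

theorem exists_seq_mem_of_subset_image {X : ℕ → Type*} (D : ∀ i, Set (X i))
    (f : ∀ i, X (i + 1) → X i) (h0 : (D 0).Nonempty) (h : ∀ i, D i ⊆ f i '' D (i + 1)) :
    ∃ x : ∀ i, X i, (∀ i, x i ∈ D i) ∧ ∀ i, f i (x (i + 1)) = x i := by
  choose g hg using fun i (a : D i) => h i a.2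
  let x : ∀ i, D i := fun i =>
    Nat.rec (motive := fun i => D i) ⟨h0.choose, h0.choose_spec⟩ (fun i a => ⟨g i a, (hg i a).1⟩) i
  exact ⟨fun i => x i, fun i => (x i).2, fun i => (hg i (x i)).2⟩

namespace invLim

variable {K : Type} [Field K] {V : ℕ → Type} [∀ i, AddCommGroup (V i)] [∀ i, Module K (V i)]
  {q : ∀ i, V (i + 1) →ₗ[K] V i}

theorem apply_eq_of_le (x y : invLim K V q) {i j : ℕ} (hij : i ≤ j) (h : x.1 j = y.1 j) :
    x.1 i = y.1 i := by
  induction j, hij using Nat.le_induction with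
  | base => exact h
  | succ j _ ih => exact ih (by rw [← x.2 j, ← y.2 j, h])

section Topology

variable [∀ i, TopologicalSpace (V i)]

theorem exists_subset_of_mem_nhds {x : invLim K V q} {U : Set (invLim K V q)} (hU : U ∈ 𝓝 x) :
    ∃ i, {y : invLim K V q | y.1 i = x.1 i} ⊆ U := by
  rw [nhds_subtype_eq_comap] at hU
  obtain ⟨Z, hZ, hZU⟩ := mem_comap.mp hU
  rw [nhds_pi] at hZ
  obtain ⟨I, hI, t, ht, htZ⟩ := mem_pi.mp hZ
  obtain ⟨i, hi⟩ := hI.bddAbove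
  refine ⟨i, fun y hy => hZU (htZ fun k hk => ?_)⟩
  rw [apply_eq_of_le y x (hi hk) hy]
  exact mem_of_mem_nhds (ht k)

theorem mem_closure_of_forall_exists_apply_eq {x : invLim K V q} {s : Set (invLim K V q)}
    (h : ∀ i, ∃ y ∈ s, y.1 i = x.1 i) : x ∈ closure s :=
  mem_closure_iff_nhds.2 fun _ hU =>
    let ⟨i, hi⟩ := exists_subset_of_mem_nhds hU
    let ⟨y, hys, hy⟩ := h i
    ⟨y, hi hy, hys⟩

end Topology

variable [∀ i, IsArtinian K (V i)]

theorem exists_forall_apply_mem_map (A : ℕ → AffineSubspace K (invLim K V q)) (hA : Antitone A)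
    (hne : ∀ j, (A j : Set (invLim K V q)).Nonempty) :
    ∃ x : invLim K V q, ∀ i j, x.1 i ∈ (A j).map (invLimProj K V q i).toAffineMap := by
  let B i j := (A j).map (invLimProj K V q i).toAffineMap
  have hB : ∀ i, Antitone (B i) := fun i _ _ h => AffineSubspace.map_mono _ (hA h)
  choose J hJ using fun i =>
    AffineSubspace.antitone_stabilizes (B i) (hB i) fun j => (hne j).image _
  have hD : ∀ i j, B i (J i) ≤ B i j := fun i j => by
    rw [← hJ i (max j (J i)) (le_max_right _ _)]
    exact hB i (le_max_left _ _)
  obtain ⟨x, hxD, hxq⟩ := exists_seq_mem_of_subset_image (fun i => (B i (J i) : Set (V i)))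
    (fun i => q i) ((hne _).image _) fun i a ha => by
      rw [← hJ i (max (J i) (J (i + 1))) (le_max_left _ _)] at ha
      obtain ⟨u, hu, rfl⟩ := ha
      refine ⟨u.1 (i + 1), ?_, u.2 i⟩
      rw [← hJ (i + 1) (max (J i) (J (i + 1))) (le_max_right _ _)]
      exact ⟨u, hu, rfl⟩
  exact ⟨⟨x, hxq⟩, fun i j => hD i j (hxD i)⟩

variable [∀ i, TopologicalSpace (V i)]

theorem nonempty_iInter_of_antitone (A : ℕ → AffineSubspace K (invLim K V q)) (hA : Antitone A)
    (hne : ∀ j, (A j : Set (invLim K V q)).Nonempty) (hcl : ∀ j, IsClosed (A j : Set (invLim K V q))) :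
    (⋂ j, (A j : Set (invLim K V q))).Nonempty := by
  obtain ⟨x, hx⟩ := exists_forall_apply_mem_map A hA hne
  exact ⟨x, Set.mem_iInter.2 fun j =>
    (hcl j).closure_subset (mem_closure_of_forall_exists_apply_eq fun i => hx i j)⟩

theorem mem_range_of_forall_apply_mem_range {W : ℕ → Type} [∀ j, AddCommGroup (W j)]
    [∀ j, Module K (W j)] {r : ∀ j, W (j + 1) →ₗ[K] W j} [∀ j, TopologicalSpace (W j)]
    [∀ j, T1Space (W j)] (T : invLim K V q →ₗ[K] invLim K W r) (hT : Continuous T)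
    {w : invLim K W r} (hw : ∀ j, w.1 j ∈ LinearMap.range ((invLimProj K W r j).comp T)) :
    w ∈ Set.range T := by
  let A j := (affineSpan K {w.1 j}).comap ((invLimProj K W r j).comp T).toAffineMap
  have hA : ∀ j, (A j : Set (invLim K V q)) = {v | (T v).1 j = w.1 j} := fun j => by
    ext v
    simp [A, AffineSubspace.coe_comap, AffineSubspace.coe_affineSpan_singleton, invLimProj]
  obtain ⟨x, hx⟩ := nonempty_iInter_of_antitone A
    (antitone_nat_of_succ_le fun j v hv => by
      rw [← SetLike.mem_coe, hA] at hv ⊢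
      exact apply_eq_of_le (T v) w j.le_succ hv)
    (fun j => by
      obtain ⟨v, hv⟩ := hw j
      exact ⟨v, (hA j).ge hv⟩)
    (fun j => by
      rw [hA]
      exact isClosed_singleton.preimage
        ((continuous_apply j).comp (continuous_subtype_val.comp hT)))
  refine ⟨x, Subtype.ext (funext fun j => ?_)⟩
  have hxj := Set.mem_iInter.1 hx j
  rwa [hA] at hxj

end invLim

theorem stmt7_general (K : Type) [Field K] [TopologicalSpace K] [IsTopologicalDivisionRing K]
    [T2Space K]
    (n : ℕ → ℕ) (q : ∀ i, (Fin (n (i + 1)) → K) →ₗ[K] (Fin (n i) → K))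
    (m : ℕ → ℕ) (r : ∀ j, (Fin (m (j + 1)) → K) →ₗ[K] (Fin (m j) → K))
    (T : ↥(invLim K (fun i => Fin (n i) → K) q) →ₗ[K]
      ↥(invLim K (fun j => Fin (m j) → K) r))
    (hT : Continuous T) :
    IsClosed (Set.range T : Set ↥(invLim K (fun j => Fin (m j) → K) r)) := by
  refine isClosed_of_closure_subset fun w hw => invLim.mem_range_of_forall_apply_mem_range T hT
    fun j => (Submodule.isClosed_of_finite_pi _).closure_subset ?_
  exact map_mem_closure ((continuous_apply j).comp continuous_subtype_val) hw
    (by rintro _ ⟨v, rfl⟩; exact ⟨v, rfl⟩)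

/-- Automatic closure theorem: every continuous `K`-linear map
`T : V → W` between pro-finite-dimensional `K`-vector spaces has closed image. -/
theorem stmt7 (K : Type) [Field K] [TopologicalSpace K] [IsTopologicalDivisionRing K]
    [T2Space K]
    (n : ℕ → ℕ) (q : ∀ i, (Fin (n (i + 1)) → K) →ₗ[K] (Fin (n i) → K))
    (hq : ∀ i, Continuous (q i))
    (m : ℕ → ℕ) (r : ∀ j, (Fin (m (j + 1)) → K) →ₗ[K] (Fin (m j) → K))
    (hr : ∀ j, Continuous (r j))
    (T : ↥(invLim K (fun i => Fin (n i) → K) q) →ₗ[K]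
      ↥(invLim K (fun j => Fin (m j) → K) r))
    (hT : Continuous T) :
    IsClosed (Set.range T : Set ↥(invLim K (fun j => Fin (m j) → K) r)) :=
  stmt7_general K n q m r T hT
end

section
/- A countable product of pro-finite-dimensional K-vector spaces, with the product topology, is again a pro-finite-dimensional K-vector space. -/
/-!
Stack the systems diagonally: the `i`-th stage of the new system is the product of the `i`-th
stages of the first `i + 1` given systems. A point of its limit determines the `n`-th coordinate
of every given system at each stage `i ≥ n` directly, and at the stages below `n` by pushing the
stage-`n` coordinate down along the connecting maps; so the limit of the diagonal system is the
product of the given limits. Each diagonal stage is a finite product of spaces `Fin d → K`, hence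
a single `Fin m → K` after reindexing coordinates.
-/

section qIter

variable {K : Type} [Field K] {V : ℕ → Type} [∀ i, AddCommGroup (V i)] [∀ i, Module K (V i)]
  (q : ∀ i, V (i + 1) →ₗ[K] V i)

lemma qIter_self (i : ℕ) (h : i ≤ i) : qIter K V q i i h = LinearMap.id := by
  cases i <;> simp [qIter]

lemma qIter_succ_apply {i j : ℕ} (h : i ≤ j) (h' : i ≤ j + 1) (x : V (j + 1)) :
    qIter K V q i (j + 1) h' x = qIter K V q i j h (q j x) := by
  simp [qIter, show i ≠ j + 1 by omega]

lemma map_qIter_succ_apply (i : ℕ) :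
    ∀ j (h : i + 1 ≤ j) (h' : i ≤ j) (x : V j),
      q i (qIter K V q (i + 1) j h x) = qIter K V q i j h' x
  | 0, h, _, _ => absurd h (by omega)
  | j + 1, h, h', x => by
    rcases eq_or_ne i j with rfl | hij
    · rw [qIter_self, qIter_succ_apply q le_rfl h', qIter_self]
      rfl
    · rw [qIter_succ_apply q (by omega) h, qIter_succ_apply q (by omega) h',
        map_qIter_succ_apply i j (by omega) (by omega)]

lemma qIter_apply_val (v : invLim K V q) (i : ℕ) :
    ∀ j (h : i ≤ j), qIter K V q i j h (v.1 j) = v.1 i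
  | 0, h => by
    obtain rfl : i = 0 := by omega
    rw [qIter_self]
    rfl
  | j + 1, h => by
    rcases eq_or_ne i (j + 1) with rfl | hij
    · rw [qIter_self]
      rfl
    · rw [qIter_succ_apply q (by omega) h, v.2 j, qIter_apply_val v i j (by omega)]

lemma continuous_qIter [∀ i, TopologicalSpace (V i)] (hq : ∀ i, Continuous (q i)) (i : ℕ) :
    ∀ j (h : i ≤ j), Continuous (qIter K V q i j h)
  | 0, h => by
    obtain rfl : i = 0 := by omega
    rw [qIter_self]
    exact continuous_id
  | j + 1, h => by
    rcases eq_or_ne i (j + 1) with rfl | hij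
    · rw [qIter_self]
      exact continuous_id
    · have hj : i ≤ j := by omega
      rw [show ⇑(qIter K V q i (j + 1) h) = qIter K V q i j hj ∘ q j from
        funext (qIter_succ_apply q hj h)]
      exact (continuous_qIter hq i j hj).comp (hq j)

end qIter

section Diagonal

variable {K : Type} [Field K] {V : ℕ → ℕ → Type} [∀ n i, AddCommGroup (V n i)]
  [∀ n i, Module K (V n i)] (Q : ∀ n i, V n (i + 1) →ₗ[K] V n i)

variable (V) in
abbrev diagStage (i : ℕ) : Type := ∀ n : Fin (i + 1), V n i

def diagMap (i : ℕ) : diagStage V (i + 1) →ₗ[K] diagStage V i :=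
  LinearMap.pi fun n => Q n i ∘ₗ LinearMap.proj n.castSucc

lemma diagMap_apply (i : ℕ) (w : diagStage V (i + 1)) (n : Fin (i + 1)) :
    diagMap Q i w n = Q n i (w n.castSucc) :=
  rfl

lemma continuous_diagMap [TopologicalSpace K] [∀ n i, TopologicalSpace (V n i)]
    (hQ : ∀ n i, Continuous (Q n i)) (i : ℕ) : Continuous (diagMap Q i) :=
  continuous_pi fun n => (hQ n i).comp (continuous_apply _)

def toDiag (v : ∀ n, invLim K (V n) (Q n)) : invLim K (diagStage V) (diagMap Q) :=
  ⟨fun i n => (v n).1 i, fun i => funext fun n => (v n).2 i⟩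

def ofDiagCoord (w : invLim K (diagStage V) (diagMap Q)) (n i : ℕ) : V n i :=
  if h : n ≤ i then w.1 i ⟨n, by omega⟩
  else qIter K (V n) (Q n) i n (by omega) (w.1 n ⟨n, by omega⟩)

lemma ofDiagCoord_mem (w : invLim K (diagStage V) (diagMap Q)) (n : ℕ) :
    ofDiagCoord Q w n ∈ invLim K (V n) (Q n) := by
  intro i
  unfold ofDiagCoord
  by_cases h : n ≤ i
  · rw [dif_pos h, dif_pos (by omega)]
    exact congrFun (w.2 i) ⟨n, by omega⟩
  · rw [dif_neg h]
    rcases eq_or_ne n (i + 1) with rfl | hn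
    · rw [dif_pos le_rfl, qIter_succ_apply (Q (i + 1)) le_rfl (by omega), qIter_self]
      rfl
    · rw [dif_neg (by omega), map_qIter_succ_apply]

def ofDiag (w : invLim K (diagStage V) (diagMap Q)) (n : ℕ) : invLim K (V n) (Q n) :=
  ⟨ofDiagCoord Q w n, ofDiagCoord_mem Q w n⟩

lemma toDiag_ofDiag (w : invLim K (diagStage V) (diagMap Q)) : toDiag Q (ofDiag Q w) = w :=
  Subtype.ext <| funext fun i => funext fun n => by
    simp only [toDiag, ofDiag, ofDiagCoord, dif_pos (Nat.lt_succ_iff.mp n.2)]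

lemma ofDiag_toDiag (v : ∀ n, invLim K (V n) (Q n)) : ofDiag Q (toDiag Q v) = v := by
  funext n
  refine Subtype.ext <| funext fun i => ?_
  simp only [ofDiag, ofDiagCoord]
  split_ifs with h
  · rfl
  · exact qIter_apply_val (Q n) (v n) i n (by omega)

lemma continuous_ofDiagCoord [TopologicalSpace K] [∀ n i, TopologicalSpace (V n i)]
    (hQ : ∀ n i, Continuous (Q n i)) (n i : ℕ) :
    Continuous fun w : invLim K (diagStage V) (diagMap Q) => ofDiagCoord Q w n i := by
  have hcoord : ∀ j (k : Fin (j + 1)),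
      Continuous fun w : invLim K (diagStage V) (diagMap Q) => w.1 j k :=
    fun j k => (continuous_apply k).comp ((continuous_apply j).comp continuous_subtype_val)
  unfold ofDiagCoord
  split_ifs
  · exact hcoord i _
  · exact (continuous_qIter (Q n) (hQ n) i n _).comp (hcoord n _)

def prodInvLimEquivDiag [TopologicalSpace K] [∀ n i, TopologicalSpace (V n i)]
    (hQ : ∀ n i, Continuous (Q n i)) :
    (∀ n, invLim K (V n) (Q n)) ≃L[K] invLim K (diagStage V) (diagMap Q) where
  toFun := toDiag Q
  invFun := ofDiag Q
  left_inv := ofDiag_toDiag Q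
  right_inv := toDiag_ofDiag Q
  map_add' _ _ := rfl
  map_smul' _ _ := rfl
  continuous_toFun := Continuous.subtype_mk (continuous_pi fun i => continuous_pi fun _ =>
    ((continuous_apply i).comp continuous_subtype_val).comp (continuous_apply _)) _
  continuous_invFun := continuous_pi fun n =>
    (continuous_pi (continuous_ofDiagCoord Q hQ n)).subtype_mk _

end Diagonal

variable {K : Type} [Field K] [TopologicalSpace K] {A B : ℕ → Type}
  [∀ i, AddCommGroup (A i)] [∀ i, Module K (A i)] [∀ i, TopologicalSpace (A i)]
  [∀ i, AddCommGroup (B i)] [∀ i, Module K (B i)] [∀ i, TopologicalSpace (B i)] in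
def invLimCongr {qa : ∀ i, A (i + 1) →ₗ[K] A i} {qb : ∀ i, B (i + 1) →ₗ[K] B i}
    (e : ∀ i, A i ≃L[K] B i) (hcomm : ∀ i x, e i (qa i x) = qb i (e (i + 1) x)) :
    invLim K A qa ≃L[K] invLim K B qb where
  toFun v := ⟨fun i => e i (v.1 i), fun i => by rw [← hcomm, v.2 i]⟩
  invFun w := ⟨fun i => (e i).symm (w.1 i), fun i => (e i).injective <| by
    rw [hcomm, ContinuousLinearEquiv.apply_symm_apply, w.2 i,
      ContinuousLinearEquiv.apply_symm_apply]⟩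
  left_inv v := Subtype.ext <| funext fun i => (e i).symm_apply_apply _
  right_inv w := Subtype.ext <| funext fun i => (e i).apply_symm_apply _
  map_add' v v' := Subtype.ext <| funext fun i => map_add (e i) _ _
  map_smul' c v := Subtype.ext <| funext fun i => map_smul (e i) _ _
  continuous_toFun := Continuous.subtype_mk (continuous_pi fun i =>
    (e i).continuous.comp ((continuous_apply i).comp continuous_subtype_val)) _
  continuous_invFun := Continuous.subtype_mk (continuous_pi fun i =>
    (e i).symm.continuous.comp ((continuous_apply i).comp continuous_subtype_val)) _

def ContinuousLinearEquiv.piCurry (R : Type*) [Semiring R] {ι : Type*} {κ : ι → Type*}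
    (α : ∀ i, κ i → Type*) [∀ i j, AddCommMonoid (α i j)] [∀ i j, Module R (α i j)]
    [∀ i j, TopologicalSpace (α i j)] :
    ((p : Sigma κ) → α p.1 p.2) ≃L[R] ((i : ι) → (j : κ i) → α i j) where
  toLinearEquiv := LinearEquiv.piCurry R α
  continuous_toFun := continuous_pi fun _ => continuous_pi fun _ => continuous_apply _
  continuous_invFun := continuous_pi fun p => (continuous_apply p.2).comp (continuous_apply p.1)

def piFinSigmaEquiv (K : Type*) [Semiring K] [TopologicalSpace K] {k : ℕ} (d : Fin k → ℕ) :
    (∀ n, Fin (d n) → K) ≃L[K] (Fin (∑ n, d n) → K) :=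
  (ContinuousLinearEquiv.piCurry K fun n (_ : Fin (d n)) => K).symm.trans
    (ContinuousLinearEquiv.piCongrLeft K (fun _ => K) finSigmaFinEquiv)

theorem stmt9_general (K : Type) [Field K] [TopologicalSpace K]
    (d : ℕ → ℕ → ℕ)
    (q : ∀ n i, (Fin (d n (i + 1)) → K) →ₗ[K] (Fin (d n i) → K))
    (hq : ∀ n i, Continuous (q n i)) :
    ∃ m : ℕ → ℕ, ∃ r : ∀ i, (Fin (m (i + 1)) → K) →ₗ[K] (Fin (m i) → K),
      (∀ i, Continuous (r i)) ∧
      Nonempty ((∀ n, ↥(invLim K (fun i => Fin (d n i) → K) (q n))) ≃L[K]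
        ↥(invLim K (fun i => Fin (m i) → K) r)) := by
  let m i := ∑ n : Fin (i + 1), d n i
  let e i : diagStage (fun n i => Fin (d n i) → K) i ≃L[K] (Fin (m i) → K) :=
    piFinSigmaEquiv K fun n : Fin (i + 1) => d n i
  let r i : (Fin (m (i + 1)) → K) →ₗ[K] (Fin (m i) → K) :=
    (e i).toLinearEquiv.toLinearMap ∘ₗ diagMap q i ∘ₗ (e (i + 1)).symm.toLinearEquiv.toLinearMap
  have hr i : Continuous (r i) := by
    change Continuous (e i ∘ diagMap q i ∘ (e (i + 1)).symm)
    exact (e i).continuous.comp ((continuous_diagMap q hq i).comp (e (i + 1)).symm.continuous)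
  refine ⟨m, r, hr, ⟨(prodInvLimEquivDiag q hq).trans (invLimCongr e fun i x => ?_)⟩⟩
  simp [r]

/-- A countable product of pro-finite-dimensional `K`-vector spaces,
with the product topology, is again a pro-finite-dimensional `K`-vector space:
it is topologically `K`-linearly isomorphic to an inverse limit of an inverse
sequence of finite-dimensional `K`-vector spaces. -/
theorem stmt9 (K : Type) [Field K] [TopologicalSpace K] [IsTopologicalDivisionRing K]
    [T2Space K]
    (d : ℕ → ℕ → ℕ)
    (q : ∀ n i, (Fin (d n (i + 1)) → K) →ₗ[K] (Fin (d n i) → K))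
    (hq : ∀ n i, Continuous (q n i)) :
    ∃ m : ℕ → ℕ, ∃ r : ∀ i, (Fin (m (i + 1)) → K) →ₗ[K] (Fin (m i) → K),
      (∀ i, Continuous (r i)) ∧
      Nonempty ((∀ n, ↥(invLim K (fun i => Fin (d n i) → K) (q n))) ≃L[K]
        ↥(invLim K (fun i => Fin (m i) → K) r)) :=
  stmt9_general K d q hq
end
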